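/- Let k be a natural number, G = (ℤ/2ℤ)^k, A = F₂[G] its group algebra over F₂, and I ⊆ A the augmentation ideal. Then I^k is the one-dimensional F₂-subspace of A spanned by the sum Σ_{g ∈ G} g of all elements of G; in particular I^k ≠ 0. -/

import Mathlib

/-!
Setting: `Gk k = (ℤ/2ℤ)^k` written multiplicatively; `Ak k = F₂[Gk k]` its group algebra over
`F₂ = ZMod 2`; `aug` the augmentation homomorphism and `augI` the augmentation ideal.
-/

noncomputable section

/-- The elementary abelian 2-group `(ℤ/2ℤ)^k`, written multiplicatively. -/
abbrev Gk (k : ℕ) := Multiplicative (Fin k → ZMod 2)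

/-- The group algebra `F₂[(ℤ/2ℤ)^k]`. -/
abbrev Ak (k : ℕ) := MonoidAlgebra (ZMod 2) (Gk k)

/-- The augmentation homomorphism `ε : F₂[G] → F₂`, `ε(∑ a_g · g) = ∑ a_g`. -/
def aug (k : ℕ) : Ak k →ₐ[ZMod 2] ZMod 2 :=
  MonoidAlgebra.lift (ZMod 2) (ZMod 2) (Gk k) 1

/-- The augmentation ideal `I = ker ε`. -/
def augI (k : ℕ) : Ideal (Ak k) := RingHom.ker (aug k).toRingHom

/- Write `x i = gᵢ - 1` for the standard generators `gᵢ` of `G`. The augmentation ideal is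
generated by the `x i`, and `(x i)² = gᵢ² - 1 = 0` in characteristic `2`, so among the products
of `k` generators only `∏ x i` survives; it equals `∏ (1 + gᵢ) = ∑_g g =: σ`. Finally
`a * σ = ε(a) • σ`, so the principal ideal `(σ) = I^k` is the `F₂`-line through `σ`. -/

open Set MonoidAlgebra

theorem Ideal.span_range_pow_card_eq_span_prod {A ι : Type*} [CommSemiring A] [Fintype ι]
    (x : ι → A) (hx : ∀ i, x i * x i = 0) :
    Ideal.span (range x) ^ Fintype.card ι = Ideal.span {∏ i, x i} := by
  refine le_antisymm ?_ ((Ideal.span_singleton_le_iff_mem _).mpr ?_)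
  · rw [Ideal.span, Submodule.span_pow, Submodule.span_le]
    intro a ha
    obtain ⟨f, rfl⟩ := Set.mem_pow.mp ha
    choose c hc using fun j => (f j).2
    rw [List.prod_ofFn]
    simp only [← hc]
    by_cases hinj : Function.Injective c
    · have hbij := (Fintype.bijective_iff_injective_and_card c).mpr ⟨hinj, by simp⟩
      rw [Fintype.prod_bijective c hbij _ x fun _ => rfl]
      exact Ideal.subset_span rfl
    · obtain ⟨i, j, hij, hne⟩ : ∃ i j, c i = c j ∧ i ≠ j := by
        simpa [Function.Injective] using hinj
      rw [← Finset.mul_prod_erase _ _ (Finset.mem_univ i),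
        ← Finset.mul_prod_erase _ _ (Finset.mem_erase.mpr ⟨hne.symm, Finset.mem_univ j⟩),
        ← mul_assoc, hij, hx, zero_mul]
      exact Ideal.zero_mem _
  · simpa using Ideal.prod_mem_prod (s := Finset.univ) (I := fun _ => Ideal.span (range x))
      fun i _ => Ideal.subset_span (mem_range_self i)

namespace MonoidAlgebra

section Augmentation

variable {R G : Type*} [CommRing R] [CommMonoid G]

theorem sub_algebraMap_lift_one_mem_span (a : MonoidAlgebra R G) :
    a - algebraMap R _ (lift R R G 1 a) ∈
      Ideal.span (range fun g : G => single g (1 : R) - 1) := by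
  induction a using MonoidAlgebra.induction_on with
  | of g =>
    simpa [← one_def] using
      Ideal.subset_span (mem_range_self (f := fun g : G => single g (1 : R) - 1) g)
  | add a b ha hb =>
    simpa [map_add, add_sub_add_comm] using Ideal.add_mem _ ha hb
  | smul r a ha =>
    simpa [map_smul, Algebra.smul_def, mul_sub] using Ideal.mul_mem_left _ (algebraMap R _ r) ha

theorem single_sub_one_mem_span_of_closure_eq_top {ι : Type*} {x : ι → G}
    (hx : Submonoid.closure (range x) = ⊤) (g : G) :
    single g (1 : R) - 1 ∈ Ideal.span (range fun i => single (x i) (1 : R) - 1) := by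
  induction (hx ▸ Submonoid.mem_top g : g ∈ Submonoid.closure (range x))
    using Submonoid.closure_induction with
  | mem _ h =>
    obtain ⟨i, rfl⟩ := h
    exact Ideal.subset_span ⟨i, rfl⟩
  | one => simp [one_def]
  | mul a b _ _ ha hb =>
    have : single (a * b) (1 : R) - 1 = (single a 1 - 1) * single b 1 + (single b 1 - 1) := by
      rw [sub_mul, single_mul_single, one_mul, one_mul]; abel
    rw [this]
    exact Ideal.add_mem _ (Ideal.mul_mem_right _ _ ha) hb

theorem ker_lift_one_eq_span {ι : Type*} {x : ι → G} (hx : Submonoid.closure (range x) = ⊤) :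
    RingHom.ker (lift R R G 1).toRingHom =
      Ideal.span (range fun i => single (x i) (1 : R) - 1) := by
  apply le_antisymm
  · intro a ha
    have h := sub_algebraMap_lift_one_mem_span a
    rw [show lift R R G 1 a = 0 from ha, map_zero, sub_zero] at h
    refine Ideal.span_le.mpr ?_ h
    rintro _ ⟨g, rfl⟩
    exact single_sub_one_mem_span_of_closure_eq_top hx g
  · rw [Ideal.span_le]
    rintro _ ⟨i, rfl⟩
    simp [RingHom.mem_ker]

end Augmentation

section SumUniv

variable {R G : Type*} [CommSemiring R] [Group G] [Fintype G]

theorem single_one_mul_sum_univ_single (g : G) :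
    single g (1 : R) * ∑ h : G, single h 1 = ∑ h : G, single h 1 := by
  simp only [Finset.mul_sum, single_mul_single, one_mul]
  exact Fintype.sum_bijective (g * ·) (Group.mulLeft_bijective g) _ _ fun _ => rfl

theorem mul_sum_univ_single (a : MonoidAlgebra R G) :
    a * ∑ g : G, single g (1 : R) = lift R R G 1 a • ∑ g : G, single g 1 := by
  induction a using MonoidAlgebra.induction_on with
  | of g => simp [single_one_mul_sum_univ_single]
  | add a b ha hb => rw [add_mul, ha, hb, map_add, add_smul]
  | smul r a ha => rw [smul_mul_assoc, ha, map_smul, smul_assoc]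

theorem restrictScalars_span_singleton_sum_univ_single :
    (Ideal.span {∑ g : G, single g (1 : R)}).restrictScalars R =
      Submodule.span R {∑ g : G, single g 1} := by
  ext a
  rw [Submodule.restrictScalars_mem, Ideal.mem_span_singleton', Submodule.mem_span_singleton]
  constructor
  · rintro ⟨b, rfl⟩
    exact ⟨lift R R G 1 b, (mul_sum_univ_single b).symm⟩
  · rintro ⟨r, rfl⟩
    exact ⟨algebraMap R _ r, (Algebra.smul_def r _).symm⟩

theorem sum_univ_single_ne_zero [Nontrivial R] : ∑ g : G, single g (1 : R) ≠ 0 := by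
  intro h
  have := congrArg (fun a : MonoidAlgebra R G => a.coeff 1) h
  simp [coeff_sum, Finsupp.finsetSum_apply, coeff_single] at this

end SumUniv

theorem prod_sum_single_pi_single {R ι M : Type*} [CommSemiring R] [Fintype ι] [DecidableEq ι]
    [AddCommMonoid M] [Fintype M] :
    ∏ i : ι, ∑ m : M, single (Multiplicative.ofAdd (Pi.single i m)) (1 : R) =
      ∑ g : Multiplicative (ι → M), single g 1 := by
  rw [Fintype.prod_sum]
  simp only [prod_single, Finset.prod_const_one, ← ofAdd_sum, Finset.univ_sum_single]
  exact Fintype.sum_equiv Multiplicative.ofAdd _ _ fun _ => rfl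

end MonoidAlgebra

section Generators

variable {k : ℕ}

namespace Gk

def gen (k : ℕ) (i : Fin k) : Gk k := Multiplicative.ofAdd (Pi.single i 1)

theorem closure_range_gen : Submonoid.closure (range (gen k)) = ⊤ := by
  refine eq_top_iff.mpr fun g _ => ?_
  have hg : g = ∏ i, gen k i ^ (g.toAdd i).val := by
    simp only [gen, ← ofAdd_nsmul, ← ofAdd_sum, ← Pi.single_smul, nsmul_one,
      ZMod.natCast_zmod_val, Finset.univ_sum_single]
    rfl
  rw [hg]
  exact Submonoid.prod_mem _ fun i _ =>
    Submonoid.pow_mem _ (Submonoid.subset_closure (mem_range_self i)) _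

theorem mul_self (g : Gk k) : g * g = 1 := by
  show Multiplicative.ofAdd (g.toAdd + g.toAdd) = Multiplicative.ofAdd 0
  congr 1
  funext i
  exact CharTwo.add_self_eq_zero _

end Gk

open Gk

instance : CharP (Ak k) 2 :=
  charP_of_injective_algebraMap (algebraMap (ZMod 2) (Ak k)).injective 2

theorem single_sub_one_mul_self (g : Gk k) :
    (single g (1 : ZMod 2) - 1) * (single g 1 - 1) = 0 := by
  rw [CharTwo.sub_eq_add, CharTwo.add_mul_self, single_mul_single, Gk.mul_self, mul_one, mul_one,
    one_def, CharTwo.add_self_eq_zero]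

theorem prod_single_gen_sub_one :
    ∏ i, (single (gen k i) (1 : ZMod 2) - 1) = ∑ g : Gk k, single g 1 := by
  rw [← prod_sum_single_pi_single]
  refine Finset.prod_congr rfl fun i _ => ?_
  rw [show (Finset.univ : Finset (ZMod 2)) = {0, 1} from rfl, Finset.sum_pair zero_ne_one]
  simp [gen, CharTwo.sub_eq_add, add_comm, one_def]

theorem augI_eq_span : augI k = Ideal.span (range fun i => single (gen k i) (1 : ZMod 2) - 1) :=
  ker_lift_one_eq_span closure_range_gen

end Generators

/-- `I^k` is the one-dimensional `F₂`-subspace of `A` spanned by `∑_{g ∈ G} g`;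
in particular `I^k ≠ 0`. -/
theorem pow_augI_eq_span_sum_univ (k : ℕ) :
    (augI k ^ k).restrictScalars (ZMod 2) =
      Submodule.span (ZMod 2) {∑ g : Gk k, MonoidAlgebra.single g (1 : ZMod 2)} ∧
    augI k ^ k ≠ ⊥ := by
  have hpow : augI k ^ k = Ideal.span {∑ g : Gk k, single g (1 : ZMod 2)} := by
    simpa [augI_eq_span, prod_single_gen_sub_one] using
      Ideal.span_range_pow_card_eq_span_prod _ fun i => single_sub_one_mul_self (Gk.gen k i)
  rw [hpow, restrictScalars_span_singleton_sum_univ_single, Ne, Ideal.span_singleton_eq_bot]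
  exact ⟨rfl, sum_univ_single_ne_zero⟩

end
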